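/- arXiv:1111.6846 — 8 statements merged into one kernel-verified Lean document; each statement's English description precedes it below -/
import Mathlib

section
/- Assume μ is quasi-invariant under the flip. Let X ⊆ 𝒴 be a measurable subset of the set of atoms. Then the following are equivalent: (1) μ(X) = 0; (2) ν(P₁(X)) = 0, where P₁(X) is the projection of X onto the first coordinate; (3) ν(P₂(X)) = 0, where P₂(X) is the projection of X onto the second coordinate. -/
/-!
A section `{s | (t, s) ∈ X}` of a set of atoms of `κ t` has positive `κ t`-measure exactly when it
is nonempty, so the fibrewise formula for `ν ⊗ₘ κ` makes `μ X = 0` equivalent to the first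
projection of `X` being `ν`-null. Quasi-invariance under the flip transfers nullness from `X` to
the flipped set, whose first projection is the second projection of `X`.
-/

open MeasureTheory ProbabilityTheory

section

variable {α β : Type*} [MeasurableSpace α] [MeasurableSpace β]

lemma ProbabilityTheory.Kernel.measure_preimage_mk_eq_zero_iff {κ : Kernel α β}
    {s : Set (α × β)} (hatom : ∀ p ∈ s, κ p.1 {p.2} ≠ 0) (a : α) :
    κ a (Prod.mk a ⁻¹' s) = 0 ↔ a ∉ Prod.fst '' s := by
  refine ⟨?_, fun ha => ?_⟩
  · rintro h ⟨⟨a, b⟩, hab, rfl⟩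
    exact hatom _ hab (measure_mono_null (Set.singleton_subset_iff.2 hab) h)
  · have hempty : Prod.mk a ⁻¹' s = ∅ :=
      Set.eq_empty_of_forall_notMem fun b hb => ha ⟨(a, b), hb, rfl⟩
    simp [hempty]

namespace MeasureTheory.Measure

lemma compProd_apply_eq_zero_iff {μ : Measure α} [SFinite μ] {κ : Kernel α β} [IsSFiniteKernel κ]
    {s : Set (α × β)} (hs : MeasurableSet s) :
    (μ ⊗ₘ κ) s = 0 ↔ ∀ᵐ a ∂μ, κ a (Prod.mk a ⁻¹' s) = 0 := by
  rw [compProd_apply hs, lintegral_eq_zero_iff (Kernel.measurable_kernel_prodMk_left hs)]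
  rfl

lemma compProd_eq_zero_iff_fst_image {μ : Measure α} [SFinite μ] {κ : Kernel α β}
    [IsSFiniteKernel κ] {s : Set (α × β)} (hs : MeasurableSet s)
    (hatom : ∀ p ∈ s, κ p.1 {p.2} ≠ 0) :
    (μ ⊗ₘ κ) s = 0 ↔ μ (Prod.fst '' s) = 0 := by
  simp only [compProd_apply_eq_zero_iff hs, Kernel.measure_preimage_mk_eq_zero_iff hatom,
    ← measure_eq_zero_iff_ae_notMem]

lemma measure_preimage_swap_eq_zero_iff {ρ : Measure (α × α)} (h₁ : ρ ≪ ρ.map Prod.swap)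
    (h₂ : ρ.map Prod.swap ≪ ρ) (s : Set (α × α)) :
    ρ (Prod.swap ⁻¹' s) = 0 ↔ ρ s = 0 := by
  have hmap := MeasurableEquiv.prodComm.map_apply (μ := ρ) s
  exact ⟨fun h => h₁ (hmap.trans h), fun h => hmap.symm.trans (h₂ h)⟩

end MeasureTheory.Measure

end

open Measure in
theorem compProd_null_iff_projections_null_general
    {Y : Type*} [MeasurableSpace Y]
    (ν : Measure Y) [IsProbabilityMeasure ν]
    (κ : Kernel Y Y) [IsMarkovKernel κ]
    (hqi : ν ⊗ₘ κ ≪ (ν ⊗ₘ κ).map Prod.swap ∧ (ν ⊗ₘ κ).map Prod.swap ≪ ν ⊗ₘ κ)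
    (X : Set (Y × Y)) (hX : MeasurableSet X)
    (hXsub : X ⊆ {p : Y × Y | 0 < κ p.1 {p.2} ∧ 0 < κ p.2 {p.1}}) :
    ((ν ⊗ₘ κ) X = 0 ↔ ν (Prod.fst '' X) = 0) ∧
    ((ν ⊗ₘ κ) X = 0 ↔ ν (Prod.snd '' X) = 0) := by
  have hsnd := compProd_eq_zero_iff_fst_image (μ := ν) (hX.preimage measurable_swap)
    fun p hp => (hXsub hp).2.ne'
  rw [measure_preimage_swap_eq_zero_iff hqi.1 hqi.2, ← Set.image_swap_eq_preimage_swap,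
    ← Set.image_comp] at hsnd
  exact ⟨compProd_eq_zero_iff_fst_image hX fun p hp => (hXsub hp).1.ne', hsnd⟩

/-- Let `κ` be a Markov kernel from `Y` to `Y`, `ν` a Borel probability measure on `Y`,
`μ = ν ⊗ₘ κ`, and assume `μ` is quasi-invariant under the flip `θ(t,s) = (s,t)`.
For any measurable subset `X` of the set of atoms
`𝒴 = {(t,s) | κ t {s} > 0 ∧ κ s {t} > 0}`, the following are equivalent:
`μ X = 0`; the first projection of `X` is `ν`-null; the second projection of `X` is `ν`-null. -/
theorem compProd_null_iff_projections_null
    {Y : Type*} [MeasurableSpace Y] [StandardBorelSpace Y]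
    (ν : Measure Y) [IsProbabilityMeasure ν]
    (κ : Kernel Y Y) [IsMarkovKernel κ]
    (hqi : ν ⊗ₘ κ ≪ (ν ⊗ₘ κ).map Prod.swap ∧ (ν ⊗ₘ κ).map Prod.swap ≪ ν ⊗ₘ κ)
    (X : Set (Y × Y)) (hX : MeasurableSet X)
    (hXsub : X ⊆ {p : Y × Y | 0 < κ p.1 {p.2} ∧ 0 < κ p.2 {p.1}}) :
    ((ν ⊗ₘ κ) X = 0 ↔ ν (Prod.fst '' X) = 0) ∧
    ((ν ⊗ₘ κ) X = 0 ↔ ν (Prod.snd '' X) = 0) :=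
  compProd_null_iff_projections_null_general ν κ hqi X hX hXsub
end

section
/- Assume μ is quasi-invariant under the flip. Let h : Y → Y be a measurable map whose graph is weakly contained in 𝒴, i.e., there exists a ν-null set N₁ ⊆ Y such that {(t, h(t)) : t ∈ Y} \ (N₁ × N₁) ⊆ 𝒴. Then for every measurable set E ⊆ Y one has ν(E) = 0 if and only if ν(h(E)) = 0, where h(E) denotes the image of E under h. -/
/-!
Quasi-invariance of `μ = ν ⊗ₘ κ` under the flip makes `ν` non-singular for `κ`: comparing the
second marginals of `μ` and of its flip gives `κ ∘ₘ ν ≪ ν`, so a `ν`-null set `G` is charged by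
`κ t` only for `ν`-almost no `t`. Off the null set `N₁`, each pair `(t, h t)` is an atom in both
directions. Hence a point `h t` of `h '' E` charges `E` (it gives mass to `t`) and a point `t` of
`E` charges `h '' E` (it gives mass to `h t`), so each of `E`, `h '' E` is null when the other is.
-/

open MeasureTheory ProbabilityTheory Set

namespace MeasureTheory.Measure

variable {Y : Type*} [MeasurableSpace Y] {ν : Measure Y} {κ : Kernel Y Y}

lemma comp_absolutelyContinuous_of_compProd_absolutelyContinuous_map_swap
    [SFinite ν] [IsMarkovKernel κ] (hac : ν ⊗ₘ κ ≪ (ν ⊗ₘ κ).map Prod.swap) : κ ∘ₘ ν ≪ ν := by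
  have hsnd : (ν ⊗ₘ κ).snd ≪ ((ν ⊗ₘ κ).map Prod.swap).snd := hac.map measurable_snd
  rwa [snd_map_swap, snd_compProd, fst_compProd] at hsnd

lemma ae_kernel_apply_eq_zero_of_measure_eq_zero (hac : κ ∘ₘ ν ≪ ν) {G : Set Y}
    (hG : ν G = 0) : ∀ᵐ t ∂ν, κ t G = 0 := by
  have hcomp : ∫⁻ t, κ t (toMeasurable ν G) ∂ν = 0 := by
    rw [← bind_apply (measurableSet_toMeasurable ν G) κ.aemeasurable]
    exact hac (by rwa [measure_toMeasurable])
  filter_upwards [(lintegral_eq_zero_iff (κ.measurable_coe (measurableSet_toMeasurable ν G))).1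
    hcomp] with t ht
  exact measure_mono_null (subset_toMeasurable ν G) ht

lemma measure_eq_zero_of_forall_kernel_apply_ne_zero (hac : κ ∘ₘ ν ≪ ν) {S G N : Set Y}
    (hG : ν G = 0) (hN : ν N = 0) (hS : ∀ t ∈ S, t ∉ N → κ t G ≠ 0) : ν S = 0 := by
  refine measure_mono_null (fun t ht => ?_)
    (measure_union_null (ae_iff.1 (ae_kernel_apply_eq_zero_of_measure_eq_zero hac hG)) hN)
  by_cases htN : t ∈ N
  · exact Or.inr htN
  · exact Or.inl (hS t ht htN)

end MeasureTheory.Measure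

theorem null_iff_image_null_of_graph_weakly_contained_in_atoms_general
    {Y : Type*} [MeasurableSpace Y]
    (ν : Measure Y) [IsProbabilityMeasure ν]
    (κ : Kernel Y Y) [IsMarkovKernel κ]
    (hqi : ν ⊗ₘ κ ≪ (ν ⊗ₘ κ).map Prod.swap ∧ (ν ⊗ₘ κ).map Prod.swap ≪ ν ⊗ₘ κ)
    (h : Y → Y)
    (hgraph : ∃ N₁ : Set Y, ν N₁ = 0 ∧
      {p : Y × Y | p.2 = h p.1} \ (N₁ ×ˢ N₁) ⊆
        {p : Y × Y | 0 < κ p.1 {p.2} ∧ 0 < κ p.2 {p.1}}) :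
    ∀ E : Set Y, MeasurableSet E → (ν E = 0 ↔ ν (h '' E) = 0) := by
  obtain ⟨N₁, hN₁, hatoms⟩ := hgraph
  have hac := Measure.comp_absolutelyContinuous_of_compProd_absolutelyContinuous_map_swap hqi.1
  have atom (t : Y) (ht : t ∉ N₁ ∨ h t ∉ N₁) : 0 < κ t {h t} ∧ 0 < κ (h t) {t} :=
    hatoms (a := (t, h t)) ⟨rfl, fun hp => ht.elim (· hp.1) (· hp.2)⟩
  intro E _
  constructor
  · refine fun hE => Measure.measure_eq_zero_of_forall_kernel_apply_ne_zero hac hE hN₁ ?_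
    rintro _ ⟨t, ht, rfl⟩ htN
    exact ((atom t (.inr htN)).2.trans_le (measure_mono (singleton_subset_iff.2 ht))).ne'
  · refine fun hhE => Measure.measure_eq_zero_of_forall_kernel_apply_ne_zero hac hhE hN₁ ?_
    intro t ht htN
    exact ((atom t (.inl htN)).1.trans_le
      (measure_mono (singleton_subset_iff.2 (mem_image_of_mem h ht)))).ne'

/-- Let `κ` be a Markov kernel from `Y` to `Y`, `ν` a Borel probability measure on `Y`,
`μ = ν ⊗ₘ κ`, and assume `μ` is quasi-invariant under the flip. Let `h : Y → Y` be a
measurable map whose graph is weakly contained in the set of atoms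
`𝒴 = {(t,s) | κ t {s} > 0 ∧ κ s {t} > 0}`. Then for every measurable `E ⊆ Y`,
`ν E = 0` iff `ν (h '' E) = 0`. -/
theorem null_iff_image_null_of_graph_weakly_contained_in_atoms
    {Y : Type*} [MeasurableSpace Y] [StandardBorelSpace Y]
    (ν : Measure Y) [IsProbabilityMeasure ν]
    (κ : Kernel Y Y) [IsMarkovKernel κ]
    (hqi : ν ⊗ₘ κ ≪ (ν ⊗ₘ κ).map Prod.swap ∧ (ν ⊗ₘ κ).map Prod.swap ≪ ν ⊗ₘ κ)
    (h : Y → Y) (hmeas : Measurable h)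
    (hgraph : ∃ N₁ : Set Y, ν N₁ = 0 ∧
      {p : Y × Y | p.2 = h p.1} \ (N₁ ×ˢ N₁) ⊆
        {p : Y × Y | 0 < κ p.1 {p.2} ∧ 0 < κ p.2 {p.1}}) :
    ∀ E : Set Y, MeasurableSet E → (ν E = 0 ↔ ν (h '' E) = 0) :=
  null_iff_image_null_of_graph_weakly_contained_in_atoms_general ν κ hqi h hgraph
end

section
/- Let h : Y → Y be a measurable map whose graph is weakly contained in 𝒴, i.e., there exists a ν-null set N₁ ⊆ Y such that Γ_h \ (N₁ × N₁) ⊆ 𝒴, where Γ_h = {(t, h(t)) : t ∈ Y}. Then μ(Γ_h) > 0. -/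
open MeasureTheory ProbabilityTheory

/-!
Disintegrating along the first coordinate, `(ν ⊗ₘ κ) Γ_h = ∫ κ_t {h t} dν(t)`. Weak containment
of the graph in the atoms makes the integrand positive at every `t ∉ N₁`, hence `ν`-almost
everywhere, and a positive function has positive integral against a nonzero measure.
-/

section

variable {α β : Type*} [MeasurableSpace α] [MeasurableSpace β] [MeasurableEq β] {f : α → β}

lemma Measurable.measurableSet_graph (hf : Measurable f) :
    MeasurableSet {p : α × β | p.2 = f p.1} :=
  measurableSet_eq_fun measurable_snd (hf.comp measurable_fst)

lemma ProbabilityTheory.Kernel.measurable_apply_singleton_comp (κ : Kernel α β)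
    [IsSFiniteKernel κ] (hf : Measurable f) : Measurable fun a => κ a {f a} :=
  Kernel.measurable_kernel_prodMk_left hf.measurableSet_graph

namespace MeasureTheory.Measure

variable (μ : Measure α) [SFinite μ] (κ : Kernel α β) [IsSFiniteKernel κ]

lemma compProd_graph_eq_lintegral (hf : Measurable f) :
    (μ ⊗ₘ κ) {p | p.2 = f p.1} = ∫⁻ a, κ a {f a} ∂μ :=
  compProd_apply hf.measurableSet_graph

lemma compProd_graph_pos_of_ae_pos [NeZero μ] (hf : Measurable f)
    (hpos : ∀ᵐ a ∂μ, 0 < κ a {f a}) : 0 < (μ ⊗ₘ κ) {p | p.2 = f p.1} := by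
  rw [compProd_graph_eq_lintegral μ κ hf, pos_iff_ne_zero]
  intro hzero
  have hae_zero : ∀ᵐ a ∂μ, κ a {f a} = 0 :=
    (lintegral_eq_zero_iff (κ.measurable_apply_singleton_comp hf)).mp hzero
  obtain ⟨a, ha_pos, ha_zero⟩ := (hpos.and hae_zero).exists
  exact ha_pos.ne' ha_zero

end MeasureTheory.Measure

end

/-- Let `κ` be a Markov kernel from `Y` to `Y`, `ν` a Borel probability measure on `Y`
and `μ = ν ⊗ₘ κ`. If `h : Y → Y` is a measurable map whose graph is weakly contained in
the set of atoms `𝒴 = {(t,s) | κ t {s} > 0 ∧ κ s {t} > 0}`, then `μ (Γ_h) > 0`. -/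
theorem compProd_graph_pos_of_weakly_contained_in_atoms
    {Y : Type*} [MeasurableSpace Y] [StandardBorelSpace Y]
    (ν : Measure Y) [IsProbabilityMeasure ν]
    (κ : Kernel Y Y) [IsMarkovKernel κ]
    (h : Y → Y) (hmeas : Measurable h)
    (hgraph : ∃ N₁ : Set Y, ν N₁ = 0 ∧
      {p : Y × Y | p.2 = h p.1} \ (N₁ ×ˢ N₁) ⊆
        {p : Y × Y | 0 < κ p.1 {p.2} ∧ 0 < κ p.2 {p.1}}) :
    0 < (ν ⊗ₘ κ) {p : Y × Y | p.2 = h p.1} := by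
  obtain ⟨N₁, hN₁, hsub⟩ := hgraph
  refine Measure.compProd_graph_pos_of_ae_pos ν κ hmeas ?_
  filter_upwards [measure_eq_zero_iff_ae_notMem.mp hN₁] with t ht
  exact (hsub (a := (t, h t)) ⟨rfl, fun hmem => ht hmem.1⟩).1
end

section
/- Assume μ is quasi-invariant under the flip. If X ⊆ 𝒴 is a measurable subset of the set of atoms with μ(X) = 0, then there exists a ν-null measurable set N₀ ⊆ Y such that X ⊆ N₀ × N₀. -/
/-!
If `μ X = 0`, then for `ν`-a.e. `t` the section `{s | (t, s) ∈ X}` is `κ t`-null and so contains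
no atom of `κ t`; hence the first coordinates of the points of `X` lie in a `ν`-null set.
Quasi-invariance makes `Prod.swap ⁻¹' X` null as well, which handles the second coordinates.
-/

open MeasureTheory ProbabilityTheory

namespace MeasureTheory

lemma Measure.of_ae_of_measure_singleton_ne_zero {α : Type*} [MeasurableSpace α]
    {μ : Measure α} {p : α → Prop} {a : α} (h : ∀ᵐ x ∂μ, p x) (ha : μ {a} ≠ 0) : p a := by
  by_contra hpa
  exact ha (measure_mono_null (Set.singleton_subset_iff.2 hpa) (ae_iff.1 h))

lemma Measure.exists_null_fst_of_compProd_null {α β : Type*} [MeasurableSpace α]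
    [MeasurableSpace β] {μ : Measure α} [SFinite μ] {κ : Kernel α β} [IsSFiniteKernel κ]
    {s : Set (α × β)} (hs : (μ ⊗ₘ κ) s = 0) :
    ∃ N : Set α, MeasurableSet N ∧ μ N = 0 ∧ ∀ p ∈ s, κ p.1 {p.2} ≠ 0 → p.1 ∈ N := by
  have hsections : ∀ᵐ a ∂μ, ∀ᵐ b ∂κ a, (a, b) ∉ s :=
    Measure.ae_ae_of_ae_compProd (measure_eq_zero_iff_ae_notMem.1 hs)
  obtain ⟨N, hbad, hN, hN0⟩ := exists_measurable_superset_of_null (ae_iff.1 hsections)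
  refine ⟨N, hN, hN0, fun p hp hatom => ?_⟩
  by_contra hpN
  have hgood : ∀ᵐ b ∂κ p.1, (p.1, b) ∉ s := not_not.1 fun h => hpN (hbad h)
  exact Measure.of_ae_of_measure_singleton_ne_zero hgood hatom hp

end MeasureTheory

theorem null_subset_of_atoms_contained_in_null_square_general
    {Y : Type*} [MeasurableSpace Y]
    (ν : Measure Y) [IsProbabilityMeasure ν]
    (κ : Kernel Y Y) [IsMarkovKernel κ]
    (hqi : ν ⊗ₘ κ ≪ (ν ⊗ₘ κ).map Prod.swap ∧ (ν ⊗ₘ κ).map Prod.swap ≪ ν ⊗ₘ κ)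
    (X : Set (Y × Y))
    (hXsub : X ⊆ {p : Y × Y | 0 < κ p.1 {p.2} ∧ 0 < κ p.2 {p.1}})
    (hXnull : (ν ⊗ₘ κ) X = 0) :
    ∃ N₀ : Set Y, MeasurableSet N₀ ∧ ν N₀ = 0 ∧ X ⊆ N₀ ×ˢ N₀ := by
  have hswap_null : (ν ⊗ₘ κ) (Prod.swap ⁻¹' X) = 0 :=
    Measure.preimage_null_of_map_null measurable_swap.aemeasurable (hqi.2 hXnull)
  obtain ⟨N₁, hN₁, hN₁0, hfst⟩ := Measure.exists_null_fst_of_compProd_null hXnull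
  obtain ⟨N₂, hN₂, hN₂0, hsnd⟩ := Measure.exists_null_fst_of_compProd_null hswap_null
  refine ⟨N₁ ∪ N₂, hN₁.union hN₂, measure_union_null hN₁0 hN₂0, fun p hp => ?_⟩
  exact ⟨Or.inl (hfst p hp (hXsub hp).1.ne'),
    Or.inr (hsnd p.swap hp (hXsub hp).2.ne')⟩

/-- Let `κ` be a Markov kernel from `Y` to `Y`, `ν` a Borel probability measure on `Y`,
`μ = ν ⊗ₘ κ`, and assume `μ` is quasi-invariant under the flip. If `X` is a measurable
subset of the set of atoms `𝒴 = {(t,s) | κ t {s} > 0 ∧ κ s {t} > 0}` with `μ X = 0`,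
then there is a measurable `ν`-null set `N₀ ⊆ Y` with `X ⊆ N₀ × N₀`. -/
theorem null_subset_of_atoms_contained_in_null_square
    {Y : Type*} [MeasurableSpace Y] [StandardBorelSpace Y]
    (ν : Measure Y) [IsProbabilityMeasure ν]
    (κ : Kernel Y Y) [IsMarkovKernel κ]
    (hqi : ν ⊗ₘ κ ≪ (ν ⊗ₘ κ).map Prod.swap ∧ (ν ⊗ₘ κ).map Prod.swap ≪ ν ⊗ₘ κ)
    (X : Set (Y × Y)) (hX : MeasurableSet X)
    (hXsub : X ⊆ {p : Y × Y | 0 < κ p.1 {p.2} ∧ 0 < κ p.2 {p.1}})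
    (hXnull : (ν ⊗ₘ κ) X = 0) :
    ∃ N₀ : Set Y, MeasurableSet N₀ ∧ ν N₀ = 0 ∧ X ⊆ N₀ ×ˢ N₀ :=
  null_subset_of_atoms_contained_in_null_square_general ν κ hqi X hXsub hXnull
end

section
/- Let G be a group and H an abelian subgroup of G satisfying the relative ICC condition. If c ∈ G is such that the set of left cosets {h·c·H : h ∈ H} is finite, then c belongs to the normalizer N_G(H) of H in G. -/
/-!
If `k c H = k' c H` then `k'⁻¹ k ∈ c H c⁻¹`, which centralises `c h c⁻¹` for `h ∈ H` because
`H` is abelian. So the `H`-conjugates of `c h c⁻¹` are indexed by the finitely many cosets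
`k c H`, and the relative ICC condition gives `c H c⁻¹ ≤ H`. Then every `k ∈ H` commutes with
`c⁻¹ h c`, since `c k c⁻¹ ∈ H` commutes with `h`; having a single `H`-conjugate, `c⁻¹ h c` lies
in `H` as well.
-/

open Pointwise

theorem Function.FactorsThrough.finite_range {α β γ : Type*} {f : α → β} {g : α → γ}
    (hgf : g.FactorsThrough f) (hf : (Set.range f).Finite) : (Set.range g).Finite := by
  have : Finite (Quotient (Setoid.ker f)) :=
    (Setoid.quotientKerEquivRange f).finite_iff.mpr hf.to_subtype
  rw [← Set.range_quotient_lift (s := Setoid.ker f) hgf]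
  exact Set.finite_range _

section

variable {G : Type*} [Group G]

theorem conj_eq_conj_of_commute_inv_mul {k k' g : G} (h : Commute (k'⁻¹ * k) g) :
    k * g * k⁻¹ = k' * g * k'⁻¹ :=
  calc k * g * k⁻¹ = k' * ((k'⁻¹ * k) * g) * k⁻¹ := by group
    _ = k' * (g * (k'⁻¹ * k)) * k⁻¹ := by rw [h.eq]
    _ = k' * g * k'⁻¹ := by group

variable {H : Subgroup G}

theorem conj_eq_conj_of_smul_eq_smul (hH : ∀ x ∈ H, ∀ y ∈ H, Commute x y) {c k k' h : G}
    (hh : h ∈ H) (hkk' : (k * c) • (H : Set G) = (k' * c) • (H : Set G)) :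
    k * (c * h * c⁻¹) * k⁻¹ = k' * (c * h * c⁻¹) * k'⁻¹ := by
  have hmem : c⁻¹ * (k'⁻¹ * k) * c ∈ H := by
    simpa [mul_assoc] using (leftCoset_eq_iff H).mp hkk'.symm
  apply conj_eq_conj_of_commute_inv_mul
  simpa [mul_assoc] using (hH _ hmem h hh).conj c

theorem finite_conj_of_finite_smul (hH : ∀ x ∈ H, ∀ y ∈ H, Commute x y) {c h : G}
    (hh : h ∈ H)
    (hfin : {X : Set G | ∃ k ∈ H, X = (k * c) • (H : Set G)}.Finite) :
    {x : G | ∃ k ∈ H, x = k * (c * h * c⁻¹) * k⁻¹}.Finite := by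
  have hrange : ∀ {β : Type _} (F : G → β),
      {y | ∃ k ∈ H, y = F k} = Set.range fun k : H ↦ F k :=
    fun F ↦ by ext; simp [eq_comm]
  rw [hrange] at hfin ⊢
  exact Function.FactorsThrough.finite_range
    (fun k k' hkk' ↦ conj_eq_conj_of_smul_eq_smul hH hh hkk') hfin

theorem commute_conj_inv_of_conj_mem (hH : ∀ x ∈ H, ∀ y ∈ H, Commute x y) {c h k : G}
    (hc : ∀ k ∈ H, c * k * c⁻¹ ∈ H)
    (hh : h ∈ H) (hk : k ∈ H) : Commute k (c⁻¹ * h * c) := by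
  simpa [mul_assoc] using (hH _ (hc k hk) h hh).conj c⁻¹

end

/-- Let `H` be an abelian subgroup of `G` satisfying the relative ICC condition
(for every `g ∉ H` the set `{h g h⁻¹ : h ∈ H}` is infinite). If the set of left cosets
`{h c H : h ∈ H}` is finite, then `c` belongs to the normalizer of `H` in `G`. -/
theorem mem_normalizer_of_finite_cosets
    {G : Type*} [Group G] (H : Subgroup G)
    (hab : ∀ a b : H, a * b = b * a)
    (hicc : ∀ g : G, g ∉ H → {x : G | ∃ h ∈ H, x = h * g * h⁻¹}.Infinite)
    (c : G)
    (hfin : {X : Set G | ∃ h ∈ H, X = (h * c) • (H : Set G)}.Finite) :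
    c ∈ Subgroup.normalizer (H : Set G) := by
  have hH : ∀ x ∈ H, ∀ y ∈ H, Commute x y :=
    fun x hx y hy ↦ congrArg Subtype.val (hab ⟨x, hx⟩ ⟨y, hy⟩)
  have mem_of_finite : ∀ g : G, {x : G | ∃ h ∈ H, x = h * g * h⁻¹}.Finite → g ∈ H :=
    fun g hg ↦ by_contra fun hgH ↦ hicc g hgH hg
  have conj_mem : ∀ h ∈ H, c * h * c⁻¹ ∈ H :=
    fun h hh ↦ mem_of_finite _ (finite_conj_of_finite_smul hH hh hfin)
  have conj_inv_mem : ∀ h ∈ H, c⁻¹ * h * c ∈ H := by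
    refine fun h hh ↦ mem_of_finite _ ((Set.finite_singleton (c⁻¹ * h * c)).subset ?_)
    rintro _ ⟨k, hk, rfl⟩
    simp [(commute_conj_inv_of_conj_mem hH conj_mem hh hk).eq]
  rw [Subgroup.mem_normalizer_iff]
  exact fun h ↦ ⟨conj_mem h, fun hh ↦ by simpa [mul_assoc] using conj_inv_mem _ hh⟩
end

section
/- Assume the relative ICC condition. Let s and t be characters of H and suppose there exists a unitary operator V on ℓ²(C) such that V⁻¹ ∘ π_s(h) ∘ V = π_t(h) for all h ∈ H. Then there exists g ∈ N_G(H) such that s(h) = t(g·h·g⁻¹) for all h ∈ H. -/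
/-!
Put `v = V ε₁`. Since `V` intertwines `π_s` and `π_t` on `H` and `ε₁` is an eigenvector of
every `π_t(h)`, `π_s(h) v = t(h) v`. Reading this off at the coordinate `σ(h d)`, where `d` is
any coordinate with `v(d) ≠ 0`, gives `|v(σ(h d))| = |v(d)|`; as `v ∈ ℓ²`, the coset
representatives `σ(h d)`, `h ∈ H`, form a finite set `F`, so `H d ⊆ F H`.
For `l ∈ H` the `H`-conjugates of `d l d⁻¹` are then among the `c l c⁻¹`, `c ∈ F`
(`H` is abelian), so relative ICC puts `d l d⁻¹` in `H`; and `d⁻¹ l d` commutes with `H`,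
so it lies in `H` too. Hence `d` normalises `H`, `σ(h d) = d`, `η(h d) = d⁻¹ h d`, and the
coordinate identity at `d` becomes `s(d⁻¹ h d) = t(h)`.
-/

open ComplexConjugate

namespace lp

variable {ι : Type*}

theorem finite_setOf_le_norm_apply {E : ι → Type*} [∀ i, NormedAddCommGroup (E i)]
    {p : ENNReal} (hp : p ≠ ⊤) (f : lp E p) {ε : ℝ} (hε : 0 < ε) :
    {i | ε ≤ ‖f i‖}.Finite := by
  rcases eq_or_ne p 0 with rfl | hp0
  · exact (lp.memℓp f).finite_dsupport.subset fun i hi hfi =>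
      hε.not_ge (by simpa [hfi] using hi)
  have hpos : 0 < p.toReal := ENNReal.toReal_pos hp0 hp
  have hsmall := ((lp.memℓp f).summable hpos).tendsto_cofinite_zero.eventually_lt_const
    (Real.rpow_pos_of_pos hε p.toReal)
  refine (Filter.eventually_cofinite.mp hsmall).subset fun i hi => ?_
  exact not_lt.mpr (Real.rpow_le_rpow hε.le hi hpos.le)

variable {𝕜 : Type*} [RCLike 𝕜] [DecidableEq ι]

theorem conj_mul_apply_of_map_single
    (U : lp (fun _ : ι => 𝕜) 2 →ₗᵢ[𝕜] lp (fun _ : ι => 𝕜) 2) {b c : ι} {z : 𝕜}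
    (hU : U (lp.single 2 b 1) = z • lp.single 2 c 1) (v : lp (fun _ : ι => 𝕜) 2) :
    conj z * U v c = v b := by
  have := U.inner_map_map (lp.single 2 b 1) v
  rw [hU, inner_smul_left, lp.inner_single_left, lp.inner_single_left] at this
  simpa using this

end lp

namespace Subgroup

variable {G : Type*} [Group G]

def IsRelICC (H : Subgroup G) : Prop :=
  ∀ g : G, g ∉ H → {x : G | ∃ h ∈ H, x = h * g * h⁻¹}.Infinite

variable {H : Subgroup G}

namespace IsRelICC

theorem mem_of_finite (hH : H.IsRelICC) {g : G}
    (hg : {x : G | ∃ h ∈ H, x = h * g * h⁻¹}.Finite) : g ∈ H :=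
  not_not.mp fun hgH => hH g hgH hg

theorem mem_of_forall_commute (hH : H.IsRelICC) {g : G} (hg : ∀ h ∈ H, h * g = g * h) :
    g ∈ H :=
  hH.mem_of_finite <| (Set.finite_singleton g).subset <| by
    rintro x ⟨h, hh, rfl⟩
    simp [hg h hh]

theorem conj_mem_of_subset_finite_cosets (hH : H.IsRelICC) (hab : ∀ a b : H, a * b = b * a)
    {d : G} {F : Set G} (hF : F.Finite) (hd : ∀ h ∈ H, ∃ c ∈ F, c⁻¹ * (h * d) ∈ H)
    {l : G} (hl : l ∈ H) : d * l * d⁻¹ ∈ H := by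
  refine hH.mem_of_finite <| (hF.image fun c => c * l * c⁻¹).subset ?_
  rintro x ⟨h, hh, rfl⟩
  obtain ⟨c, hcF, hm⟩ := hd h hh
  refine ⟨c, hcF, ?_⟩
  have hlm : l * (c⁻¹ * (h * d)) = c⁻¹ * (h * d) * l :=
    congrArg Subtype.val (hab ⟨l, hl⟩ ⟨_, hm⟩)
  calc c * l * c⁻¹ = c * (l * (c⁻¹ * (h * d))) * (c⁻¹ * (h * d))⁻¹ * c⁻¹ := by group
    _ = h * (d * l * d⁻¹) * h⁻¹ := by rw [hlm]; group

theorem mem_normalizer_of_subset_finite_cosets (hH : H.IsRelICC)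
    (hab : ∀ a b : H, a * b = b * a) {d : G} {F : Set G} (hF : F.Finite)
    (hd : ∀ h ∈ H, ∃ c ∈ F, c⁻¹ * (h * d) ∈ H) : d ∈ normalizer (H : Set G) := by
  have hconj {l : G} (hl : l ∈ H) : d * l * d⁻¹ ∈ H :=
    hH.conj_mem_of_subset_finite_cosets hab hF hd hl
  refine mem_normalizer_iff.mpr fun l => ⟨hconj, fun hl => ?_⟩
  refine hH.mem_of_forall_commute fun h hh => ?_
  have := congrArg (fun x => d⁻¹ * x * d) (congrArg Subtype.val (hab ⟨_, hconj hh⟩ ⟨_, hl⟩))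
  simpa [mul_assoc] using this

end IsRelICC

end Subgroup

section InducedRepresentation

variable {G : Type*} [Group G] [DecidableEq G] {H : Subgroup G} {C : Set G}

/-- The representation `π_χ` induced from the character `χ` of `H`, in the coordinates
`g = σ g * η g`. -/
def IsInducedRepresentation (σ : G → C) (η : G → H) (χ : H →* Circle)
    (π : G →* (lp (fun _ : C => ℂ) 2 ≃ₗᵢ[ℂ] lp (fun _ : C => ℂ) 2)) : Prop :=
  ∀ (g : G) (c : C), π g (lp.single 2 c (1 : ℂ)) =
    (χ (η (g * (c : G))) : ℂ) • lp.single 2 (σ (g * (c : G))) (1 : ℂ)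

variable {σ : G → C} {η : G → H} {χ : H →* Circle}
  {π : G →* (lp (fun _ : C => ℂ) 2 ≃ₗᵢ[ℂ] lp (fun _ : C => ℂ) 2)}

namespace IsInducedRepresentation

theorem apply_single_one (hπ : IsInducedRepresentation σ η χ π) (hC1 : (1 : G) ∈ C)
    (huniq : ∀ (g : G) (c : C) (h : H), g = (c : G) * (h : G) → c = σ g ∧ h = η g) (h : H) :
    π h (lp.single 2 ⟨1, hC1⟩ 1) = (χ h : ℂ) • lp.single 2 ⟨1, hC1⟩ 1 := by
  obtain ⟨hσ, hη⟩ := huniq h ⟨1, hC1⟩ h (one_mul _).symm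
  simpa [← hσ, ← hη] using hπ h ⟨1, hC1⟩

theorem conj_mul_apply (hπ : IsInducedRepresentation σ η χ π) (g : G) (c : C)
    (v : lp (fun _ : C => ℂ) 2) :
    conj (χ (η (g * c)) : ℂ) * π g v (σ (g * c)) = v c :=
  lp.conj_mul_apply_of_map_single (π g).toLinearIsometry (hπ g c) v

end IsInducedRepresentation

end InducedRepresentation

/-- Assume the relative ICC condition. If `s` and `t` are characters of `H` and there
is a unitary `V` on `ℓ²(C)` with `V⁻¹ π_s(h) V = π_t(h)` for all `h ∈ H`, then there
exists `g` in the normalizer of `H` with `s(h) = t(g h g⁻¹)` for all `h ∈ H`. -/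
theorem exists_normalizer_conjugate_of_unitarily_equivalent_on_H
    {G : Type*} [Group G] [DecidableEq G]
    (H : Subgroup G) (hab : ∀ a b : H, a * b = b * a)
    (hicc : ∀ g : G, g ∉ H → {x : G | ∃ h ∈ H, x = h * g * h⁻¹}.Infinite)
    (C : Set G) (hC1 : (1 : G) ∈ C)
    (σ : G → C) (η : G → H)
    (hdec : ∀ g : G, g = (σ g : G) * (η g : G))
    (huniq : ∀ (g : G) (c : C) (h : H), g = (c : G) * (h : G) → c = σ g ∧ h = η g)
    (s t : H →* Circle)
    (πs πt : G →* (lp (fun _ : C => ℂ) 2 ≃ₗᵢ[ℂ] lp (fun _ : C => ℂ) 2))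
    (hπs : ∀ (g : G) (c : C), πs g (lp.single 2 c (1 : ℂ)) =
      (s (η (g * (c : G))) : ℂ) • lp.single 2 (σ (g * (c : G))) (1 : ℂ))
    (hπt : ∀ (g : G) (c : C), πt g (lp.single 2 c (1 : ℂ)) =
      (t (η (g * (c : G))) : ℂ) • lp.single 2 (σ (g * (c : G))) (1 : ℂ))
    (V : lp (fun _ : C => ℂ) 2 ≃ₗᵢ[ℂ] lp (fun _ : C => ℂ) 2)
    (hV : ∀ (h : H) (v : lp (fun _ : C => ℂ) 2),
      V.symm (πs (h : G) (V v)) = πt (h : G) v) :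
    ∃ g ∈ Subgroup.normalizer (H : Set G), ∀ h k : H, (k : G) = g * (h : G) * g⁻¹ → s h = t k := by
  set v := V (lp.single 2 ⟨1, hC1⟩ 1)
  have hv_eigen (h : H) : πs h v = (t h : ℂ) • v := by
    rw [V.symm_apply_eq.mp (hV h _), IsInducedRepresentation.apply_single_one hπt hC1 huniq,
      map_smul]
  have hv_coord (h : H) (c : C) :
      conj (s (η (h * c)) : ℂ) * ((t h : ℂ) * v (σ (h * c))) = v c := by
    simpa [hv_eigen h] using IsInducedRepresentation.conj_mul_apply hπs h c v
  obtain ⟨d, hd⟩ : ∃ d, v d ≠ 0 := by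
    by_contra! hv0
    have hv : ‖v‖ = 1 := by simp [v, lp.norm_single]
    simp [show v = 0 from lp.ext (funext hv0)] at hv
  have hnorm (h : H) : ‖v d‖ ≤ ‖v (σ (h * d))‖ := by
    simpa [Circle.norm_coe] using (congrArg norm (hv_coord h d)).ge
  have hd_normalizer : (d : G) ∈ Subgroup.normalizer (H : Set G) :=
    Subgroup.IsRelICC.mem_normalizer_of_subset_finite_cosets hicc hab
      ((lp.finite_setOf_le_norm_apply (by simp) v (norm_pos_iff.mpr hd)).image Subtype.val)
      fun h hh => ⟨σ (h * d), ⟨_, hnorm ⟨h, hh⟩, rfl⟩, by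
        rw [inv_mul_eq_of_eq_mul (hdec _)]
        exact (η _).2⟩
  refine ⟨d, hd_normalizer, fun h k hk => ?_⟩
  obtain ⟨hσ, hη⟩ := huniq (k * d) d h (by rw [hk]; group)
  have hsk := hv_coord k d
  rw [← hσ, ← hη] at hsk
  have hst : ((s h)⁻¹ * t k : Circle) = 1 := Circle.coe_injective <| by
    rw [Circle.coe_mul, Circle.coe_inv_eq_conj, Circle.coe_one]
    simpa [← mul_assoc, hd] using hsk
  exact inv_mul_eq_one.mp hst
end

section
/- Let s and t be characters of H, let V be a unitary operator on ℓ²(C) with V⁻¹ ∘ π_s(h) ∘ V = π_t(h) for all h ∈ H, and let y = V(ε_1) ∈ ℓ²(C) with coordinates (y_c)_{c ∈ C}. Then: (1) for all h ∈ H and c ∈ C, y_c · s(η(h·c)) = t(h) · y_{σ(h·c)}; and (2) for every c ∈ C with y_c ≠ 0, the set of left cosets {h·c·H : h ∈ H} is finite. -/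
open Pointwise

open scoped InnerProductSpace

/-!
`y = V ε₁` is an eigenvector of every `π_s(h)`, `h ∈ H`, with eigenvalue `t(h)`, because `ε₁` is
one of `π_t(h)` with that eigenvalue. Since `π_s(h)` maps `ε_c` to `s(η(hc)) ε_{σ(hc)}` and
preserves inner products, pairing with `y` gives (1). In particular `|y_c| = |y_{σ(hc)}|`, and
`hcH = σ(hc)H`; as an `ℓ²` vector has only finitely many coordinates of modulus `≥ |y_c| > 0`,
only finitely many cosets `hcH` occur.
-/

theorem LinearIsometry.inner_mul_eq_of_map_eq_smul {𝕜 E E' : Type*} [RCLike 𝕜]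
    [NormedAddCommGroup E] [InnerProductSpace 𝕜 E] [NormedAddCommGroup E']
    [InnerProductSpace 𝕜 E'] (f : E →ₗᵢ[𝕜] E') {e w : E} {e' w' : E'} {a b : 𝕜}
    (he : f e = a • e') (ha : ‖a‖ = 1) (hw : f w = b • w') :
    ⟪e, w⟫_𝕜 * a = b * ⟪e', w'⟫_𝕜 := by
  have hconj : (starRingEnd 𝕜) a * a = 1 := by
    rw [RCLike.conj_mul, ha]; simp
  calc ⟪e, w⟫_𝕜 * a = ⟪f e, f w⟫_𝕜 * a := by rw [f.inner_map_map]
    _ = (starRingEnd 𝕜) a * a * (b * ⟪e', w'⟫_𝕜) := by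
        rw [he, hw, inner_smul_left, inner_smul_right]; ring
    _ = b * ⟪e', w'⟫_𝕜 := by rw [hconj, one_mul]

theorem lp.finite_setOf_le_norm {α : Type*} {E : α → Type*} [∀ i, NormedAddCommGroup (E i)]
    {p : ENNReal} (hp : 0 < p.toReal) (f : lp E p) {r : ℝ} (hr : 0 < r) :
    {i | r ≤ ‖f i‖}.Finite := by
  have hsmall : ∀ᶠ i in Filter.cofinite, ‖f i‖ ^ p.toReal < r ^ p.toReal :=
    ((lp.memℓp f).summable hp).tendsto_cofinite_zero.eventually_lt_const (by positivity)
  refine (Filter.eventually_cofinite.mp hsmall).subset fun i hi => ?_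
  exact not_lt.mpr (Real.rpow_le_rpow hr.le hi hp.le)

theorem coordinates_of_intertwiner_general
    {G : Type*} [Group G] [DecidableEq G]
    (H : Subgroup G)
    (C : Set G) (hC1 : (1 : G) ∈ C)
    (σ : G → C) (η : G → H)
    (hdec : ∀ g : G, g = (σ g : G) * (η g : G))
    (huniq : ∀ (g : G) (c : C) (h : H), g = (c : G) * (h : G) → c = σ g ∧ h = η g)
    (s t : H →* Circle)
    (πs πt : G →* (lp (fun _ : C => ℂ) 2 ≃ₗᵢ[ℂ] lp (fun _ : C => ℂ) 2))
    (hπs : ∀ (g : G) (c : C), πs g (lp.single 2 c (1 : ℂ)) =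
      (s (η (g * (c : G))) : ℂ) • lp.single 2 (σ (g * (c : G))) (1 : ℂ))
    (hπt : ∀ (g : G) (c : C), πt g (lp.single 2 c (1 : ℂ)) =
      (t (η (g * (c : G))) : ℂ) • lp.single 2 (σ (g * (c : G))) (1 : ℂ))
    (V : lp (fun _ : C => ℂ) 2 ≃ₗᵢ[ℂ] lp (fun _ : C => ℂ) 2)
    (hV : ∀ (h : H) (v : lp (fun _ : C => ℂ) 2),
      V.symm (πs (h : G) (V v)) = πt (h : G) v)
    (y : C → ℂ)
    (hy : ∀ c : C, y c = (V (lp.single 2 (⟨1, hC1⟩ : C) (1 : ℂ)) : ∀ _ : C, ℂ) c) :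
    (∀ (h : H) (c : C),
      y c * (s (η ((h : G) * (c : G))) : ℂ) = (t h : ℂ) * y (σ ((h : G) * (c : G)))) ∧
    (∀ c : C, y c ≠ 0 →
      {X : Set G | ∃ h ∈ H, X = (h * (c : G)) • (H : Set G)}.Finite) := by
  set w := V (lp.single 2 (⟨1, hC1⟩ : C) (1 : ℂ))
  have hy_inner : ∀ c : C, y c = ⟪lp.single 2 c (1 : ℂ), w⟫_ℂ := by
    simp [lp.inner_single_left, hy]
  have heigen : ∀ h : H, πs (h : G) w = (t h : ℂ) • w := fun h => by
    obtain ⟨hσ, hη⟩ := huniq ((h : G) * ((⟨1, hC1⟩ : C) : G)) ⟨1, hC1⟩ h (by simp)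
    calc πs (h : G) w = V (V.symm (πs (h : G) w)) := (V.apply_symm_apply _).symm
      _ = (t h : ℂ) • w := by rw [hV, hπt, ← hσ, ← hη, map_smul]
  have part1 : ∀ (h : H) (c : C),
      y c * (s (η ((h : G) * (c : G))) : ℂ) = (t h : ℂ) * y (σ ((h : G) * (c : G))) :=
    fun h c => by
      rw [hy_inner, hy_inner]
      exact (πs (h : G)).toLinearIsometry.inner_mul_eq_of_map_eq_smul (hπs h c)
        (Circle.norm_coe _) (heigen h)
  refine ⟨part1, fun c hc => ?_⟩
  have hlarge := lp.finite_setOf_le_norm (by norm_num) w (norm_pos_iff.mpr hc)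
  refine (hlarge.image fun c' : C => (c' : G) • (H : Set G)).subset ?_
  rintro _ ⟨h, hh, rfl⟩
  refine ⟨σ (h * c), ?_, ?_⟩
  · have hnorm := congrArg norm (part1 ⟨h, hh⟩ c)
    simp only [norm_mul, Circle.norm_coe, mul_one, one_mul] at hnorm
    simp [← hy, hnorm]
  · calc (σ (h * c) : G) • (H : Set G) = ((σ (h * c) : G) * η (h * c)) • (H : Set G) := by
          rw [mul_smul, smul_coe_set (η _).2]
      _ = (h * c) • (H : Set G) := by rw [← hdec]

/-- Let `s`, `t` be characters of `H` and `V` a unitary on `ℓ²(C)` intertwining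
`π_s|_H` and `π_t|_H`, and let `y = V(ε_1)` with coordinates `(y_c)`. Then
(1) `y_c · s(η(h c)) = t(h) · y_{σ(h c)}` for all `h ∈ H`, `c ∈ C`; and
(2) for every `c` with `y_c ≠ 0`, the set of left cosets `{h c H : h ∈ H}` is finite. -/
theorem coordinates_of_intertwiner
    {G : Type*} [Group G] [DecidableEq G]
    (H : Subgroup G) (hab : ∀ a b : H, a * b = b * a)
    (C : Set G) (hC1 : (1 : G) ∈ C)
    (σ : G → C) (η : G → H)
    (hdec : ∀ g : G, g = (σ g : G) * (η g : G))
    (huniq : ∀ (g : G) (c : C) (h : H), g = (c : G) * (h : G) → c = σ g ∧ h = η g)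
    (s t : H →* Circle)
    (πs πt : G →* (lp (fun _ : C => ℂ) 2 ≃ₗᵢ[ℂ] lp (fun _ : C => ℂ) 2))
    (hπs : ∀ (g : G) (c : C), πs g (lp.single 2 c (1 : ℂ)) =
      (s (η (g * (c : G))) : ℂ) • lp.single 2 (σ (g * (c : G))) (1 : ℂ))
    (hπt : ∀ (g : G) (c : C), πt g (lp.single 2 c (1 : ℂ)) =
      (t (η (g * (c : G))) : ℂ) • lp.single 2 (σ (g * (c : G))) (1 : ℂ))
    (V : lp (fun _ : C => ℂ) 2 ≃ₗᵢ[ℂ] lp (fun _ : C => ℂ) 2)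
    (hV : ∀ (h : H) (v : lp (fun _ : C => ℂ) 2),
      V.symm (πs (h : G) (V v)) = πt (h : G) v)
    (y : C → ℂ)
    (hy : ∀ c : C, y c = (V (lp.single 2 (⟨1, hC1⟩ : C) (1 : ℂ)) : ∀ _ : C, ℂ) c) :
    (∀ (h : H) (c : C),
      y c * (s (η ((h : G) * (c : G))) : ℂ) = (t h : ℂ) * y (σ ((h : G) * (c : G)))) ∧
    (∀ c : C, y c ≠ 0 →
      {X : Set G | ∃ h ∈ H, X = (h * (c : G)) • (H : Set G)}.Finite) :=
  coordinates_of_intertwiner_general H C hC1 σ η hdec huniq s t πs πt hπs hπt V hV y hy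
end

section
/- Assume the relative ICC condition. For characters s and t of H, the representations π_s and π_t are unitarily equivalent (there exists a unitary U on ℓ²(C) with U ∘ π_t(x) = π_s(x) ∘ U for all x ∈ G) if and only if there exists g ∈ N_G(H) such that s(h) = t(g·h·g⁻¹) for all h ∈ H. -/
open scoped ENNReal ComplexConjugate

/-!
An intertwiner `U` from `πt` to `πs` sends `ε₁`, on which `πt(H)` acts by `t`, to a vector `v ≠ 0` on
which `πs(H)` acts by `t`. Regarding `v` as a function `F` on `G` with
`F (h y k) = t(h)⁻¹ F(y) s(k)⁻¹`, the modulus `|v|` is constant on `H`-orbits in `C`, so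
square-summability makes the double coset `H c H` of a point with `v c ≠ 0` a finite union of left
cosets. As `H` is abelian, each `c w c⁻¹` (`w ∈ H`) then has finitely many `H`-conjugates, and relative
ICC gives `c H c⁻¹ ⊆ H` and then `c ∈ N_G(H)`; comparing `F (c h c⁻¹ · c) = F (c · h)` gives
`s(h) = t(c h c⁻¹)`. Conversely, for `g ∈ N_G(H)` with `s(h) = t(g h g⁻¹)`, right translation
`F ↦ F(· g⁻¹)` is a unitary intertwining `πt` with `πs`.
-/

namespace lp

variable {ι : Type*}

theorem finite_setOf_le_norm_s13 {E : ι → Type*} [∀ i, NormedAddCommGroup (E i)] {p : ℝ≥0∞}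
    (hp : 0 < p.toReal) (f : lp E p) {r : ℝ} (hr : 0 < r) : {i | r ≤ ‖f i‖}.Finite := by
  have hsum : Summable fun i => ‖f i‖ ^ p.toReal := (memℓp_gen_iff hp).1 f.2
  have hfin : {i | r ^ p.toReal ≤ ‖f i‖ ^ p.toReal}.Finite := by
    simpa [Filter.eventually_cofinite, not_lt] using
      hsum.tendsto_cofinite_zero.eventually_lt_const (by positivity)
  exact hfin.subset fun i hi => Real.rpow_le_rpow hr.le hi hp.le

theorem apply_eq_conj_mul_of_symm_single [DecidableEq ι]
    (V : lp (fun _ : ι => ℂ) 2 ≃ₗᵢ[ℂ] lp (fun _ : ι => ℂ) 2) {i j : ι} {a : ℂ}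
    (hV : V.symm (lp.single 2 i 1) = a • lp.single 2 j 1) (f : lp (fun _ : ι => ℂ) 2) :
    V f i = conj a * f j := by
  calc V f i = inner ℂ (lp.single 2 i (1 : ℂ)) (V f) := by simp [inner_single_left]
    _ = inner ℂ (V.symm (lp.single 2 i 1)) f := by
        rw [← V.symm.inner_map_map, V.symm_apply_apply]
    _ = conj a * f j := by rw [hV, inner_smul_left, inner_single_left]; simp

section WeightedComp

variable {p : ℝ≥0∞}

theorem memℓp_mul_comp_equiv (hp : 0 < p.toReal) (e : ι ≃ ι) (w : ι → Circle)
    (f : lp (fun _ : ι => ℂ) p) : Memℓp (fun i => (w i : ℂ) * f (e i)) p := by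
  refine memℓp_gen (((memℓp_gen_iff hp).1 f.2).comp_injective e.injective |>.congr fun i => ?_)
  simp [Circle.norm_coe]

variable [Fact (1 ≤ p)]

noncomputable def weightedCompₗᵢ (hp : 0 < p.toReal) (e : ι ≃ ι) (w : ι → Circle) :
    lp (fun _ : ι => ℂ) p →ₗᵢ[ℂ] lp (fun _ : ι => ℂ) p where
  toFun f := ⟨_, memℓp_mul_comp_equiv hp e w f⟩
  map_add' f g := by ext i; exact mul_add _ _ _
  map_smul' c f := by ext i; simp [mul_left_comm]
  norm_map' f := by
    rw [lp.norm_eq_tsum_rpow hp, lp.norm_eq_tsum_rpow hp]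
    simp only [LinearMap.coe_mk, AddHom.coe_mk, norm_mul, Circle.norm_coe, one_mul]
    rw [e.tsum_eq (fun i => ‖f i‖ ^ p.toReal)]

@[simp] theorem weightedCompₗᵢ_apply (hp : 0 < p.toReal) (e : ι ≃ ι) (w : ι → Circle)
    (f : lp (fun _ : ι => ℂ) p) (i : ι) : weightedCompₗᵢ hp e w f i = w i * f (e i) := rfl

noncomputable def weightedComp (hp : 0 < p.toReal) (e : ι ≃ ι) (w : ι → Circle) :
    lp (fun _ : ι => ℂ) p ≃ₗᵢ[ℂ] lp (fun _ : ι => ℂ) p :=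
  .ofLinearIsometry (weightedCompₗᵢ hp e w)
    (weightedCompₗᵢ hp e.symm fun i => (w (e.symm i))⁻¹).toLinearMap
    (by ext f i; simp) (by ext f i; simp)

@[simp] theorem weightedComp_apply (hp : 0 < p.toReal) (e : ι ≃ ι) (w : ι → Circle)
    (f : lp (fun _ : ι => ℂ) p) (i : ι) : weightedComp hp e w f i = w i * f (e i) := rfl

end WeightedComp

end lp

section RelativeICC

variable {G : Type*} [Group G] {H : Subgroup G}

def Subgroup.RelativeICC (H : Subgroup G) : Prop :=
  ∀ g : G, g ∉ H → {x : G | ∃ h ∈ H, x = h * g * h⁻¹}.Infinite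

namespace Subgroup.RelativeICC

theorem mem_of_forall_conj_eq (hicc : H.RelativeICC) {x : G} (hx : ∀ h ∈ H, h * x * h⁻¹ = x) :
    x ∈ H := by
  by_contra hxH
  refine hicc x hxH ((Set.finite_singleton x).subset ?_)
  rintro _ ⟨h, hh, rfl⟩
  exact hx h hh

theorem conj_mem_of_finite_cover (hicc : H.RelativeICC) (hab : ∀ a b : H, a * b = b * a)
    {S : Set G} (hS : S.Finite) {g : G} (hg : ∀ h ∈ H, ∃ c ∈ S, ∃ k ∈ H, h * g = c * k)
    {w : G} (hw : w ∈ H) : g * w * g⁻¹ ∈ H := by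
  by_contra hwH
  refine hicc _ hwH ((hS.image fun c => c * w * c⁻¹).subset ?_)
  rintro _ ⟨h, hh, rfl⟩
  obtain ⟨c, hc, k, hk, hhg⟩ := hg h hh
  have hkw : k * w = w * k := congrArg Subtype.val (hab ⟨k, hk⟩ ⟨w, hw⟩)
  refine ⟨c, hc, ?_⟩
  calc c * w * c⁻¹ = c * (k * w) * k⁻¹ * c⁻¹ := by rw [hkw]; group
    _ = (h * g) * w * (h * g)⁻¹ := by rw [hhg]; group
    _ = h * (g * w * g⁻¹) * h⁻¹ := by group

theorem mem_normalizer_of_conj_mem (hicc : H.RelativeICC) (hab : ∀ a b : H, a * b = b * a)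
    {g : G} (hg : ∀ w ∈ H, g * w * g⁻¹ ∈ H) : g ∈ Subgroup.normalizer (H : Set G) := by
  -- `H` centralises `g⁻¹ m g` because it is abelian and `g H g⁻¹ ⊆ H`
  have hinv : ∀ m ∈ H, g⁻¹ * m * g ∈ H := fun m hm =>
    hicc.mem_of_forall_conj_eq fun h hh => by
      have hcomm : (g * h * g⁻¹) * m = m * (g * h * g⁻¹) :=
        congrArg Subtype.val (hab ⟨_, hg h hh⟩ ⟨m, hm⟩)
      calc h * (g⁻¹ * m * g) * h⁻¹ = g⁻¹ * ((g * h * g⁻¹) * m) * (g * h⁻¹ * g⁻¹) * g := by group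
        _ = g⁻¹ * m * g := by rw [hcomm]; group
  refine Subgroup.mem_normalizer_iff.2 fun n => ⟨hg n, fun hn => ?_⟩
  simpa [mul_assoc] using hinv _ hn

theorem mem_normalizer_of_finite_cover (hicc : H.RelativeICC) (hab : ∀ a b : H, a * b = b * a)
    {S : Set G} (hS : S.Finite) {g : G} (hg : ∀ h ∈ H, ∃ c ∈ S, ∃ k ∈ H, h * g = c * k) :
    g ∈ Subgroup.normalizer (H : Set G) :=
  hicc.mem_normalizer_of_conj_mem hab fun _ hw => hicc.conj_mem_of_finite_cover hab hS hg hw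

end Subgroup.RelativeICC

end RelativeICC

section InducedRepresentation

variable {G : Type*} [Group G] {H : Subgroup G} {C : Set G}

structure IsCosetSplitting (H : Subgroup G) (σ : G → C) (η : G → H) : Prop where
  eq_mul : ∀ g : G, g = (σ g : G) * (η g : G)
  unique : ∀ (g : G) (c : C) (h : H), g = (c : G) * (h : G) → c = σ g ∧ h = η g

/-- `f` as a function on `G`, in the usual model of the representation induced from `u`. -/
noncomputable def inducedFun (σ : G → C) (η : G → H) (u : H →* Circle) (f : C → ℂ) (y : G) : ℂ :=
  (u (η y)⁻¹ : ℂ) * f (σ y)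

def IsInducedRep [DecidableEq C] (σ : G → C) (η : G → H) (u : H →* Circle)
    (π : G →* (lp (fun _ : C => ℂ) 2 ≃ₗᵢ[ℂ] lp (fun _ : C => ℂ) 2)) : Prop :=
  ∀ (g : G) (c : C), π g (lp.single 2 c 1) = (u (η (g * c)) : ℂ) • lp.single 2 (σ (g * c)) 1

namespace IsCosetSplitting

variable {σ : G → C} {η : G → H}

theorem sigma_mul_coe (hT : IsCosetSplitting H σ η) (g : G) (k : H) : σ (g * k) = σ g :=
  (hT.unique (g * k) (σ g) (η g * k) (by rw [Subgroup.coe_mul, ← mul_assoc, ← hT.eq_mul])).1.symm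

theorem eta_mul_coe (hT : IsCosetSplitting H σ η) (g : G) (k : H) : η (g * k) = η g * k :=
  (hT.unique (g * k) (σ g) (η g * k) (by rw [Subgroup.coe_mul, ← mul_assoc, ← hT.eq_mul])).2.symm

theorem sigma_coe (hT : IsCosetSplitting H σ η) (c : C) : σ c = c :=
  (hT.unique c c 1 (by simp)).1.symm

theorem eta_coe (hT : IsCosetSplitting H σ η) (c : C) : η c = 1 :=
  (hT.unique c c 1 (by simp)).2.symm

theorem sigma_sigma_mul (hT : IsCosetSplitting H σ η) {z : G}
    (hz : z ∈ Subgroup.normalizer (H : Set G)) (y : G) : σ (σ y * z) = σ (y * z) := by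
  have hk : z⁻¹ * (η y : G)⁻¹ * z ∈ H := by
    simpa using (Subgroup.mem_normalizer_iff''.1 hz _).1 (η y)⁻¹.2
  have hy : (σ y : G) * z = y * z * (z⁻¹ * (η y : G)⁻¹ * z) := by
    rw [eq_mul_inv_of_mul_eq (hT.eq_mul y).symm]; group
  calc σ (σ y * z) = σ (y * z * (⟨_, hk⟩ : H)) := congrArg σ hy
    _ = σ (y * z) := hT.sigma_mul_coe _ _

def rightMulEquiv (hT : IsCosetSplitting H σ η) {g : G}
    (hg : g ∈ Subgroup.normalizer (H : Set G)) : C ≃ C where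
  toFun c := σ (c * g)
  invFun c := σ (c * g⁻¹)
  left_inv c := by simp [hT.sigma_sigma_mul (inv_mem hg), hT.sigma_coe]
  right_inv c := by simp [hT.sigma_sigma_mul hg, hT.sigma_coe]

variable {u : H →* Circle}

theorem inducedFun_coe (hT : IsCosetSplitting H σ η) (f : C → ℂ) (c : C) :
    inducedFun σ η u f c = f c := by
  simp [inducedFun, hT.sigma_coe, hT.eta_coe]

theorem inducedFun_mul_coe (hT : IsCosetSplitting H σ η) (f : C → ℂ) (y : G) (k : H) :
    inducedFun σ η u f (y * k) = (u k⁻¹ : ℂ) * inducedFun σ η u f y := by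
  simp only [inducedFun, hT.sigma_mul_coe, hT.eta_mul_coe, mul_inv_rev, map_mul, Circle.coe_mul,
    mul_assoc]

end IsCosetSplitting

namespace IsInducedRep

variable [DecidableEq C] {σ : G → C} {η : G → H} {u t : H →* Circle}
  {π : G →* (lp (fun _ : C => ℂ) 2 ≃ₗᵢ[ℂ] lp (fun _ : C => ℂ) 2)}

theorem apply_eq_inducedFun (hπ : IsInducedRep σ η u π) (x : G) (f : lp (fun _ : C => ℂ) 2)
    (d : C) : π x f d = inducedFun σ η u f (x⁻¹ * d) := by
  have hV : (π x).symm (lp.single 2 d 1) =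
      (u (η (x⁻¹ * d)) : ℂ) • lp.single 2 (σ (x⁻¹ * d)) 1 := by
    rw [← LinearIsometryEquiv.coe_inv, ← map_inv, hπ]
  rw [lp.apply_eq_conj_mul_of_symm_single _ hV, inducedFun, ← Circle.coe_inv_eq_conj, map_inv]

theorem inducedFun_apply (hπ : IsInducedRep σ η u π) (hT : IsCosetSplitting H σ η) (x : G)
    (f : lp (fun _ : C => ℂ) 2) (y : G) :
    inducedFun σ η u (π x f) y = inducedFun σ η u f (x⁻¹ * y) :=
  calc inducedFun σ η u (π x f) y = (u (η y)⁻¹ : ℂ) * inducedFun σ η u f (x⁻¹ * σ y) := by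
        rw [inducedFun, hπ.apply_eq_inducedFun]
    _ = inducedFun σ η u f (x⁻¹ * σ y * η y) := (hT.inducedFun_mul_coe _ _ _).symm
    _ = inducedFun σ η u f (x⁻¹ * y) := by rw [mul_assoc, ← hT.eq_mul]

theorem apply_single_one (hπ : IsInducedRep σ η u π) (hT : IsCosetSplitting H σ η)
    (hC1 : (1 : G) ∈ C) (h : H) :
    π h (lp.single 2 ⟨1, hC1⟩ 1) = (u h : ℂ) • lp.single 2 ⟨1, hC1⟩ 1 := by
  have h1 : (h : G) * ((⟨1, hC1⟩ : C) : G) = ((⟨1, hC1⟩ : C) : G) * h := by simp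
  rw [hπ, h1, hT.sigma_mul_coe, hT.eta_mul_coe, hT.sigma_coe, hT.eta_coe, one_mul]

section Eigenvector

variable {v : lp (fun _ : C => ℂ) 2}

theorem inducedFun_coe_mul (hπ : IsInducedRep σ η u π) (hT : IsCosetSplitting H σ η)
    (hv : ∀ h : H, π h v = (t h : ℂ) • v) (h : H) (y : G) :
    inducedFun σ η u v (h * y) = (t h⁻¹ : ℂ) * inducedFun σ η u v y := by
  calc inducedFun σ η u v (h * y) = inducedFun σ η u (π (h⁻¹ : H) v) y := by
        rw [hπ.inducedFun_apply hT]; simp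
    _ = (t h⁻¹ : ℂ) * inducedFun σ η u v y := by
        rw [hv]; simp [inducedFun, mul_left_comm]

theorem norm_apply_sigma_coe_mul (hπ : IsInducedRep σ η u π) (hT : IsCosetSplitting H σ η)
    (hv : ∀ h : H, π h v = (t h : ℂ) • v) (h : H) (c : C) : ‖v (σ (h * c))‖ = ‖v c‖ := by
  have := congrArg norm (hπ.inducedFun_coe_mul hT hv h c)
  simpa [inducedFun, hT.sigma_coe, Circle.norm_coe] using this

theorem map_eq_map_conj_of_apply_ne_zero (hπ : IsInducedRep σ η u π) (hT : IsCosetSplitting H σ η)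
    (hv : ∀ h : H, π h v = (t h : ℂ) • v) {c : C} (hc : v c ≠ 0) {h k : H}
    (hk : (k : G) = c * h * (c : G)⁻¹) : u h = t k := by
  have hkc : (k : G) * c = c * h := by rw [hk]; group
  have := hπ.inducedFun_coe_mul hT hv k c
  rw [hkc, hT.inducedFun_mul_coe, hT.inducedFun_coe] at this
  have hinv : u h⁻¹ = t k⁻¹ := Circle.coe_injective (mul_right_cancel₀ hc this)
  rwa [map_inv, map_inv, inv_inj] at hinv

theorem exists_mem_normalizer (hπ : IsInducedRep σ η u π) (hT : IsCosetSplitting H σ η)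
    (hicc : H.RelativeICC) (hab : ∀ a b : H, a * b = b * a)
    (hv : ∀ h : H, π h v = (t h : ℂ) • v) (hv0 : v ≠ 0) :
    ∃ g ∈ Subgroup.normalizer (H : Set G), ∀ h k : H, (k : G) = g * h * g⁻¹ → u h = t k := by
  obtain ⟨c, hc⟩ : ∃ c, v c ≠ 0 := by
    by_contra! hzero
    exact hv0 (lp.ext (funext hzero))
  have hS := (lp.finite_setOf_le_norm_s13 (by norm_num) v (norm_pos_iff.2 hc)).image Subtype.val
  refine ⟨c, hicc.mem_normalizer_of_finite_cover hab hS fun h hh => ?_,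
    fun h k hk => hπ.map_eq_map_conj_of_apply_ne_zero hT hv hc hk⟩
  exact ⟨σ (h * c), ⟨_, (hπ.norm_apply_sigma_coe_mul hT hv ⟨h, hh⟩ c).ge, rfl⟩,
    η (h * c), (η _).2, hT.eq_mul _⟩

end Eigenvector

end IsInducedRep

namespace IsCosetSplitting

variable {σ : G → C} {η : G → H} {g : G} {s t : H →* Circle}

noncomputable def intertwiner (hT : IsCosetSplitting H σ η)
    (hg : g ∈ Subgroup.normalizer (H : Set G)) (t : H →* Circle) :
    lp (fun _ : C => ℂ) 2 ≃ₗᵢ[ℂ] lp (fun _ : C => ℂ) 2 :=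
  lp.weightedComp (by norm_num) (hT.rightMulEquiv (inv_mem hg))
    fun d => t (η (d * g⁻¹))⁻¹

theorem intertwiner_apply (hT : IsCosetSplitting H σ η)
    (hg : g ∈ Subgroup.normalizer (H : Set G)) (f : lp (fun _ : C => ℂ) 2) (d : C) :
    hT.intertwiner hg t f d = inducedFun σ η t f (d * g⁻¹) := rfl

theorem inducedFun_intertwiner (hT : IsCosetSplitting H σ η)
    (hg : g ∈ Subgroup.normalizer (H : Set G))
    (hst : ∀ h k : H, (k : G) = g * h * g⁻¹ → s h = t k) (f : lp (fun _ : C => ℂ) 2) (y : G) :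
    inducedFun σ η s (hT.intertwiner hg t f) y = inducedFun σ η t f (y * g⁻¹) := by
  have hk : g * η y * g⁻¹ ∈ H := (Subgroup.mem_normalizer_iff.1 hg _).1 (η y).2
  calc inducedFun σ η s (hT.intertwiner hg t f) y
        = (s (η y)⁻¹ : ℂ) * inducedFun σ η t f (σ y * g⁻¹) := rfl
    _ = (t ⟨_, hk⟩⁻¹ : ℂ) * inducedFun σ η t f (σ y * g⁻¹) := by
        rw [map_inv, map_inv, hst (η y) ⟨_, hk⟩ rfl]
    _ = inducedFun σ η t f (σ y * g⁻¹ * (⟨_, hk⟩ : H)) := (hT.inducedFun_mul_coe _ _ _).symm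
    _ = inducedFun σ η t f (y * g⁻¹) := by
        conv_rhs => rw [hT.eq_mul y]
        congr 1; group

theorem intertwiner_comm [DecidableEq C] (hT : IsCosetSplitting H σ η)
    (hg : g ∈ Subgroup.normalizer (H : Set G))
    (hst : ∀ h k : H, (k : G) = g * h * g⁻¹ → s h = t k)
    {πs πt : G →* (lp (fun _ : C => ℂ) 2 ≃ₗᵢ[ℂ] lp (fun _ : C => ℂ) 2)}
    (hπs : IsInducedRep σ η s πs) (hπt : IsInducedRep σ η t πt) (x : G)
    (f : lp (fun _ : C => ℂ) 2) : hT.intertwiner hg t (πt x f) = πs x (hT.intertwiner hg t f) := by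
  ext d
  rw [intertwiner_apply, hπt.inducedFun_apply hT, hπs.apply_eq_inducedFun,
    hT.inducedFun_intertwiner hg hst, mul_assoc]

end IsCosetSplitting

end InducedRepresentation

/-- Assume the relative ICC condition. For characters `s` and `t` of `H`, the
representations `π_s` and `π_t` are unitarily equivalent if and only if there is
`g` in the normalizer of `H` with `s(h) = t(g h g⁻¹)` for all `h ∈ H`. -/
theorem unitarily_equivalent_iff_normalizer_conjugate
    {G : Type*} [Group G] [DecidableEq G]
    (H : Subgroup G) (hab : ∀ a b : H, a * b = b * a)
    (hicc : ∀ g : G, g ∉ H → {x : G | ∃ h ∈ H, x = h * g * h⁻¹}.Infinite)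
    (C : Set G) (hC1 : (1 : G) ∈ C)
    (σ : G → C) (η : G → H)
    (hdec : ∀ g : G, g = (σ g : G) * (η g : G))
    (huniq : ∀ (g : G) (c : C) (h : H), g = (c : G) * (h : G) → c = σ g ∧ h = η g)
    (s t : H →* Circle)
    (πs πt : G →* (lp (fun _ : C => ℂ) 2 ≃ₗᵢ[ℂ] lp (fun _ : C => ℂ) 2))
    (hπs : ∀ (g : G) (c : C), πs g (lp.single 2 c (1 : ℂ)) =
      (s (η (g * (c : G))) : ℂ) • lp.single 2 (σ (g * (c : G))) (1 : ℂ))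
    (hπt : ∀ (g : G) (c : C), πt g (lp.single 2 c (1 : ℂ)) =
      (t (η (g * (c : G))) : ℂ) • lp.single 2 (σ (g * (c : G))) (1 : ℂ)) :
    (∃ U : lp (fun _ : C => ℂ) 2 ≃ₗᵢ[ℂ] lp (fun _ : C => ℂ) 2,
      ∀ (x : G) (v : lp (fun _ : C => ℂ) 2), U (πt x v) = πs x (U v)) ↔
    (∃ g ∈ Subgroup.normalizer (H : Set G), ∀ h k : H, (k : G) = g * (h : G) * g⁻¹ → s h = t k) := by
  have hT : IsCosetSplitting H σ η := ⟨hdec, huniq⟩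
  constructor
  · rintro ⟨U, hU⟩
    refine IsInducedRep.exists_mem_normalizer hπs hT hicc hab (v := U (lp.single 2 ⟨1, hC1⟩ 1))
      (fun h => ?_) ?_
    · rw [← hU, IsInducedRep.apply_single_one hπt hT hC1, map_smul]
    · rw [Ne, LinearIsometryEquiv.map_eq_zero_iff, ← norm_eq_zero, lp.norm_single (by norm_num)]
      simp
  · rintro ⟨g, hg, hst⟩
    exact ⟨hT.intertwiner hg t, hT.intertwiner_comm hg hst hπs hπt⟩
end
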